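/- arXiv:1807.11846 — 3 statements merged into one kernel-verified Lean document; each statement's English description precedes it below -/
import Mathlib

section
/- The function u(x) = (e^{ax} - 1)(e^{bx} - 1)e^{cx} is convex on [0, ∞) for all nonnegative parameters a, b, c ≥ 0. -/
/-!
Nonnegative, monotone, convex functions on a set are closed under multiplication: two of them
vary together, so `ConvexOn.mul` applies. For `a, b, c ≥ 0` each of `exp (a x) - 1`,
`exp (b x) - 1` and `exp (c x)` belongs to this class on `[0, ∞)`.
-/

open Real Set

section NonnegMonotoneConvex

variable {𝕜 : Type*} [Field 𝕜] [LinearOrder 𝕜] [IsStrictOrderedRing 𝕜] {s : Set 𝕜} {f g : 𝕜 → 𝕜}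

structure NonnegMonotoneConvexOn (s : Set 𝕜) (f : 𝕜 → 𝕜) : Prop where
  nonneg : ∀ ⦃x⦄, x ∈ s → 0 ≤ f x
  monotoneOn : MonotoneOn f s
  convexOn : ConvexOn 𝕜 s f

theorem NonnegMonotoneConvexOn.mul (hf : NonnegMonotoneConvexOn s f)
    (hg : NonnegMonotoneConvexOn s g) : NonnegMonotoneConvexOn s (f * g) where
  nonneg _ hx := mul_nonneg (hf.nonneg hx) (hg.nonneg hx)
  monotoneOn := hf.monotoneOn.mul hg.monotoneOn (fun _ hx ↦ hf.nonneg hx) fun _ hx ↦ hg.nonneg hx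
  convexOn := hf.convexOn.mul hg.convexOn hf.nonneg hg.nonneg <|
    hf.monotoneOn.monovaryOn hg.monotoneOn

end NonnegMonotoneConvex

theorem convexOn_exp_mul (a : ℝ) : ConvexOn ℝ univ fun x ↦ exp (a * x) :=
  convexOn_exp.comp_linearMap (LinearMap.mul ℝ ℝ a)

theorem nonnegMonotoneConvexOn_exp_mul {a : ℝ} (ha : 0 ≤ a) :
    NonnegMonotoneConvexOn (Ici 0) fun x ↦ exp (a * x) where
  nonneg _ _ := (exp_pos _).le
  monotoneOn _ _ _ _ hxy := exp_le_exp.2 (mul_le_mul_of_nonneg_left hxy ha)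
  convexOn := (convexOn_exp_mul a).subset (subset_univ _) (convex_Ici 0)

theorem nonnegMonotoneConvexOn_exp_mul_sub_one {a : ℝ} (ha : 0 ≤ a) :
    NonnegMonotoneConvexOn (Ici 0) fun x ↦ exp (a * x) - 1 where
  nonneg _ hx := sub_nonneg.2 (one_le_exp (mul_nonneg ha hx))
  monotoneOn _ hx _ hy hxy :=
    sub_le_sub_right ((nonnegMonotoneConvexOn_exp_mul ha).monotoneOn hx hy hxy) 1
  convexOn := (nonnegMonotoneConvexOn_exp_mul ha).convexOn.sub (concaveOn_const 1 (convex_Ici 0))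

theorem stmt_0 (a b c : ℝ) (ha : 0 ≤ a) (hb : 0 ≤ b) (hc : 0 ≤ c) :
    ConvexOn ℝ (Set.Ici (0 : ℝ))
      (fun x => (Real.exp (a * x) - 1) * (Real.exp (b * x) - 1) * Real.exp (c * x)) :=
  (((nonnegMonotoneConvexOn_exp_mul_sub_one ha).mul
    (nonnegMonotoneConvexOn_exp_mul_sub_one hb)).mul (nonnegMonotoneConvexOn_exp_mul hc)).convexOn
end

section
/- The function t ↦ (2^{a/t} - 1)(2^{b/t} - 1)·2^{c/t}·t is convex on (0,∞) for all a, b, c ≥ 0, being the perspective of the convex function x ↦ (2^{ax}-1)(2^{bx}-1)2^{cx}. -/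
/-!
The function is the perspective `t ↦ t f(1/t)` of
`f x = (2^{a x} - 1)(2^{b x} - 1) 2^{c x}`, and perspectives of convex functions are convex.
On `[0, ∞)` each of the three factors of `f` is convex, nonnegative and monotone, and a product of
such functions is again of this kind, because monotone functions vary together.
-/

open Set Real

section RpowConstMul

variable {b : ℝ}

lemma convexOn_rpow_const_mul (hb : 0 < b) (k : ℝ) : ConvexOn ℝ univ fun x : ℝ ↦ b ^ (k * x) :=
  (convexOn_rpow_left hb).comp_linearMap (LinearMap.mul ℝ ℝ k)

lemma monotone_rpow_const_mul (hb : 1 ≤ b) {k : ℝ} (hk : 0 ≤ k) : Monotone fun x : ℝ ↦ b ^ (k * x) :=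
  fun _ _ hxy ↦ rpow_le_rpow_of_exponent_le hb (mul_le_mul_of_nonneg_left hxy hk)

lemma one_le_rpow_const_mul (hb : 1 ≤ b) {k x : ℝ} (hk : 0 ≤ k) (hx : 0 ≤ x) : 1 ≤ b ^ (k * x) :=
  one_le_rpow hb (mul_nonneg hk hx)

end RpowConstMul

lemma convexOn_rpow_mul_sub_one_mul_rpow_mul_sub_one_mul_rpow_mul {b : ℝ} (hb : 1 ≤ b)
    {k₁ k₂ k₃ : ℝ} (hk₁ : 0 ≤ k₁) (hk₂ : 0 ≤ k₂) (hk₃ : 0 ≤ k₃) :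
    ConvexOn ℝ (Ici 0) fun x : ℝ ↦ (b ^ (k₁ * x) - 1) * (b ^ (k₂ * x) - 1) * b ^ (k₃ * x) := by
  have hb₀ : 0 < b := zero_lt_one.trans_le hb
  have convex (k : ℝ) : ConvexOn ℝ (Ici 0) fun x : ℝ ↦ b ^ (k * x) - 1 :=
    ((convexOn_rpow_const_mul hb₀ k).subset (subset_univ _) (convex_Ici 0)).add_const (-1)
  have mono {k : ℝ} (hk : 0 ≤ k) : MonotoneOn (fun x : ℝ ↦ b ^ (k * x) - 1) (Ici 0) :=
    fun _ _ _ _ hxy ↦ sub_le_sub_right (monotone_rpow_const_mul hb hk hxy) 1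
  have nonneg {k : ℝ} (hk : 0 ≤ k) : ∀ x ∈ Ici (0 : ℝ), 0 ≤ b ^ (k * x) - 1 :=
    fun _ hx ↦ sub_nonneg.2 (one_le_rpow_const_mul hb hk hx)
  have convex₁₂ := (convex k₁).mul (convex k₂) (nonneg hk₁) (nonneg hk₂)
    ((mono hk₁).monovaryOn (mono hk₂))
  have mono₁₂ := (mono hk₁).mul (mono hk₂) (nonneg hk₁) (nonneg hk₂)
  exact convex₁₂.mul ((convexOn_rpow_const_mul hb₀ k₃).subset (subset_univ _) (convex_Ici 0))
    (fun x hx ↦ mul_nonneg (nonneg hk₁ x hx) (nonneg hk₂ x hx)) (fun _ _ ↦ by positivity)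
    (mono₁₂.monovaryOn ((monotone_rpow_const_mul hb hk₃).monotoneOn _))

lemma ConvexOn.perspective_Ioi {f : ℝ → ℝ} (hf : ConvexOn ℝ (Ioi 0) f) :
    ConvexOn ℝ (Ioi 0) fun t ↦ t * f t⁻¹ := by
  refine ⟨convex_Ioi 0, fun x (hx : 0 < x) y (hy : 0 < y) p q hp hq hpq ↦ ?_⟩
  simp only [smul_eq_mul]
  set z := p * x + q * y
  have hz : 0 < z := by
    rcases hp.eq_or_lt with rfl | hp
    · simp_all [z]
    · positivity
  -- The weights `p x / z` and `q y / z` turn `z⁻¹` into a convex combination of `x⁻¹` and `y⁻¹`.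
  have hweights : p * x / z + q * y / z = 1 := by rw [← add_div, div_self hz.ne']
  have hcomb : p * x / z * x⁻¹ + q * y / z * y⁻¹ = z⁻¹ := by
    field_simp
    rw [hpq]
  have key := hf.2 (inv_pos.2 hx) (inv_pos.2 hy) (by positivity) (by positivity) hweights
  simp only [smul_eq_mul, hcomb] at key
  calc z * f z⁻¹ ≤ z * (p * x / z * f x⁻¹ + q * y / z * f y⁻¹) :=
        mul_le_mul_of_nonneg_left key hz.le
    _ = p * (x * f x⁻¹) + q * (y * f y⁻¹) := by field_simp

theorem stmt_4 (a b c : ℝ) (ha : 0 ≤ a) (hb : 0 ≤ b) (hc : 0 ≤ c) :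
    ConvexOn ℝ (Set.Ioi (0 : ℝ))
      (fun t => t * ((2 : ℝ) ^ (a / t) - 1) * ((2 : ℝ) ^ (b / t) - 1) * (2 : ℝ) ^ (c / t)) := by
  have h := ((convexOn_rpow_mul_sub_one_mul_rpow_mul_sub_one_mul_rpow_mul one_le_two ha hb hc).subset
    Ioi_subset_Ici_self (convex_Ioi 0)).perspective_Ioi
  convert h using 2 with t
  simp only [div_eq_mul_inv]
  ring
end

section
/- If powers p_j satisfy the NOMA rate equalities r_j·t = d_j for all users j in a group with ordered decoding, then each power is uniquely determined as p_j = (K/h_j)·[∑_{l=j}^{J}(2^{d_l/(Bt)}-1)·2^{∑_{s=j}^{l-1}d_s/(Bt)} − ∑_{l=j+1}^{J}(2^{d_l/(Bt)}-1)·2^{∑_{s=j+1}^{l-1}d_s/(Bt)}]. -/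
private lemma tele8 (a : ℤ → ℝ) (j : ℤ) : ∀ N, j - 1 ≤ N →
    ∑ l ∈ Finset.Icc j N, ((2:ℝ) ^ (a l) - 1) * (2:ℝ) ^ (∑ s ∈ Finset.Ico j l, a s)
      = (2:ℝ) ^ (∑ s ∈ Finset.Icc j N, a s) - 1 := by
  refine Int.le_induction ?_ ?_
  · have h0 : Finset.Icc j (j-1) = ∅ := Finset.Icc_eq_empty (by omega)
    simp [h0]
  · intro n hn ih
    have h1 : Finset.Icc j (n+1) = insert (n+1) (Finset.Icc j n) := by
      ext x; simp only [Finset.mem_Icc, Finset.mem_insert]; omega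
    have h2 : (n+1) ∉ Finset.Icc j n := by simp
    have h3 : Finset.Ico j (n+1) = Finset.Icc j n := by
      ext x; simp only [Finset.mem_Icc, Finset.mem_Ico]; omega
    rw [h1, Finset.sum_insert h2, Finset.sum_insert h2, h3, ih,
      Real.rpow_add (by norm_num : (0:ℝ) < 2)]
    ring

theorem stmt_8 (m J : ℤ) (hmJ : m ≤ J) (h p d : ℤ → ℝ) (K B t : ℝ)
    (hh : ∀ j ∈ Finset.Icc m J, 0 < h j)
    (hp : ∀ j ∈ Finset.Icc m J, 0 ≤ p j)
    (hd : ∀ j ∈ Finset.Icc m J, 0 ≤ d j)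
    (hK : 0 < K) (hB : 0 < B) (ht : 0 < t)
    (r : ℤ → ℝ)
    (hr : ∀ j, r j = B * Real.logb 2
      (1 + h j * p j / (∑ l ∈ Finset.Icc (j + 1) J, h l * p l + K)))
    (heq : ∀ j ∈ Finset.Icc m J, r j * t = d j) :
    ∀ j ∈ Finset.Icc m J,
      p j = (K / h j) *
        ((∑ l ∈ Finset.Icc j J,
            ((2 : ℝ) ^ (d l / (B * t)) - 1) *
              (2 : ℝ) ^ (∑ s ∈ Finset.Ico j l, d s / (B * t)))
        - (∑ l ∈ Finset.Icc (j + 1) J,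
            ((2 : ℝ) ^ (d l / (B * t)) - 1) *
              (2 : ℝ) ^ (∑ s ∈ Finset.Ico (j + 1) l, d s / (B * t)))) := by
  have hBt : (0:ℝ) < B * t := mul_pos hB ht
  set a : ℤ → ℝ := fun s => d s / (B * t) with ha
  set u : ℤ → ℝ := fun j => (∑ l ∈ Finset.Icc j J, h l * p l) + K with hu
  -- positivity of u
  have upos : ∀ j, m ≤ j → 0 < u j := by
    intro j hmj
    have : 0 ≤ ∑ l ∈ Finset.Icc j J, h l * p l := by
      apply Finset.sum_nonneg
      intro l hl
      rw [Finset.mem_Icc] at hl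
      have hlm : l ∈ Finset.Icc m J := Finset.mem_Icc.mpr ⟨by omega, hl.2⟩
      exact mul_nonneg (hh l hlm).le (hp l hlm)
    simp only [hu]
    linarith
  -- key recursion
  have key : ∀ j ≤ J + 1, m ≤ j → u j = K * (2:ℝ) ^ (∑ s ∈ Finset.Icc j J, a s) := by
    refine Int.le_induction_down ?_ ?_
    · have h0 : Finset.Icc (J+1) J = ∅ := Finset.Icc_eq_empty (by omega)
      intro _
      simp [hu, h0]
    · intro n hn ih hm
      have hnJ : n - 1 ≤ J := by omega
      have hmem : n - 1 ∈ Finset.Icc m J := Finset.mem_Icc.mpr ⟨hm, hnJ⟩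
      have hun : 0 < u n := upos n (by omega)
      have hrw : n - 1 + 1 = n := by ring
      -- the rate equation at n-1
      have he := heq (n-1) hmem
      rw [hr (n-1), hrw] at he
      set x : ℝ := 1 + h (n-1) * p (n-1) / u n with hx
      have hx1 : 1 ≤ x := by
        have : 0 ≤ h (n-1) * p (n-1) / u n :=
          div_nonneg (mul_nonneg (hh _ hmem).le (hp _ hmem)) hun.le
        simp only [hx]; linarith
      have hx0 : 0 < x := lt_of_lt_of_le one_pos hx1
      have hlogb : Real.logb 2 x = d (n-1) / (B * t) := by
        field_simp at he ⊢
        linarith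
      have hxval : x = (2:ℝ) ^ (a (n-1)) := by
        rw [show a (n-1) = d (n-1) / (B * t) from rfl]
        rw [← hlogb, Real.rpow_logb (by norm_num) (by norm_num) hx0]
      -- split u (n-1)
      have h1 : Finset.Icc (n-1) J = insert (n-1) (Finset.Icc n J) := by
        ext y; simp only [Finset.mem_Icc, Finset.mem_insert]; omega
      have h2 : (n-1) ∉ Finset.Icc n J := by simp
      have husplit : u (n-1) = h (n-1) * p (n-1) + u n := by
        simp only [hu, h1, Finset.sum_insert h2]; ring
      have hhp : h (n-1) * p (n-1) = (x - 1) * u n := by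
        have : x - 1 = h (n-1) * p (n-1) / u n := by simp [hx]
        rw [this]; field_simp
      have hSn : (∑ s ∈ Finset.Icc (n-1) J, a s) = a (n-1) + ∑ s ∈ Finset.Icc n J, a s := by
        rw [h1, Finset.sum_insert h2]
      rw [husplit, hhp, ih (by omega), hSn, Real.rpow_add (by norm_num : (0:ℝ) < 2), hxval]
      ring
  -- conclude
  intro j hj
  rw [Finset.mem_Icc] at hj
  have hj1 := key j (by omega) hj.1
  have hj2 := key (j+1) (by omega) (by omega)
  have T1 : ∑ l ∈ Finset.Icc j J,
      ((2:ℝ) ^ (d l / (B*t)) - 1) * (2:ℝ) ^ (∑ s ∈ Finset.Ico j l, d s / (B*t))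
      = (2:ℝ) ^ (∑ s ∈ Finset.Icc j J, a s) - 1 := tele8 a j J (by omega)
  have T2 : ∑ l ∈ Finset.Icc (j+1) J,
      ((2:ℝ) ^ (d l / (B*t)) - 1) * (2:ℝ) ^ (∑ s ∈ Finset.Ico (j+1) l, d s / (B*t))
      = (2:ℝ) ^ (∑ s ∈ Finset.Icc (j+1) J, a s) - 1 := tele8 a (j+1) J (by omega)
  rw [T1, T2]
  have h1 : Finset.Icc j J = insert j (Finset.Icc (j+1) J) := by
    ext y; simp only [Finset.mem_Icc, Finset.mem_insert]; omega
  have h2 : j ∉ Finset.Icc (j+1) J := by simp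
  have husplit : u j = h j * p j + u (j+1) := by
    simp only [hu, h1, Finset.sum_insert h2]; ring
  have hhj : 0 < h j := hh j (Finset.mem_Icc.mpr hj)
  have : K * (2:ℝ) ^ (∑ s ∈ Finset.Icc j J, a s)
      - K * (2:ℝ) ^ (∑ s ∈ Finset.Icc (j+1) J, a s) = h j * p j := by
    rw [← hj1, ← hj2, husplit]; ring
  field_simp
  linarith [this]
end
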